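/- For any norm ‖·‖ on ℝⁿ and any t ≥ 4, the tilted norm f_t(x) = ‖x‖ + t|⟨x, x₀*⟩| satisfies: for all ε > 0, P(|f_t(Z) − E f_t(Z)| ≥ ε) ≥ c₂ exp(−C₂ ε² / b_t²), where b_t = (1+t) b(X) = Lip(f_t), Z ∼ N(0, Iₙ), and C₂, c₂ > 0 are universal constants. -/

import Mathlib

open MeasureTheory ProbabilityTheory Real
open scoped RealInnerProductSpace
open scoped ENNReal

/-- The standard Gaussian measure on `ℝⁿ`. -/
noncomputable def stdGaussian (n : ℕ) : Measure (EuclideanSpace ℝ (Fin n)) :=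
  Measure.map (MeasurableEquiv.toLp 2 (Fin n → ℝ)) (Measure.pi fun _ => gaussianReal 0 1)

lemma gaussianPDFReal_shift (a x : ℝ) :
    gaussianPDFReal a 1 x = gaussianPDFReal 0 1 x * Real.exp (a * x - a ^ 2 / 2) := by
  simp only [gaussianPDFReal, NNReal.coe_one, mul_one, sub_zero, mul_assoc, ← Real.exp_add]
  congr 1
  ring

lemma gaussianReal_eq_withDensity (a : ℝ) :
    gaussianReal a 1 = (gaussianReal 0 1).withDensity
      (fun x => ENNReal.ofReal (Real.exp (a * x - a ^ 2 / 2))) := by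
  rw [gaussianReal_of_var_ne_zero _ one_ne_zero, gaussianReal_of_var_ne_zero _ one_ne_zero,
    ← withDensity_mul _ (measurable_gaussianPDF _ _)
      (by fun_prop : Measurable fun x => ENNReal.ofReal (Real.exp (a * x - a ^ 2 / 2)))]
  congr 1
  funext x
  simp only [Pi.mul_apply, gaussianPDF]
  rw [← ENNReal.ofReal_mul (gaussianPDFReal_nonneg 0 1 x), ← gaussianPDFReal_shift]

lemma lintegral_exp_gaussian (c : ℝ) :
    ∫⁻ x, ENNReal.ofReal (Real.exp (c * x)) ∂gaussianReal 0 1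
      = ENNReal.ofReal (Real.exp (c ^ 2 / 2)) := by
  rw [gaussianReal_of_var_ne_zero _ one_ne_zero,
    lintegral_withDensity_eq_lintegral_mul _ (measurable_gaussianPDF _ _) (by fun_prop)]
  have hpt : ∀ x, gaussianPDF 0 1 x * ENNReal.ofReal (Real.exp (c * x))
      = ENNReal.ofReal (((√(2 * π))⁻¹ * Real.exp (c ^ 2 / 2)) * Real.exp (-(1/2) * (x - c) ^ 2)) := by
    intro x
    simp only [gaussianPDF]
    rw [← ENNReal.ofReal_mul (gaussianPDFReal_nonneg 0 1 x)]
    congr 1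
    simp only [gaussianPDFReal, NNReal.coe_one, mul_one, sub_zero, mul_assoc, ← Real.exp_add]
    congr 2
    ring
  simp only [Pi.mul_apply, hpt]
  have hint : Integrable (fun x => ((√(2 * π))⁻¹ * Real.exp (c ^ 2 / 2))
      * Real.exp (-(1/2) * (x - c) ^ 2)) := by
    exact ((integrable_exp_neg_mul_sq one_half_pos).comp_sub_right c).const_mul _
  rw [← ofReal_integral_eq_lintegral_ofReal hint (ae_of_all _ fun x => by positivity)]
  congr 1
  rw [integral_const_mul]
  have : (∫ x : ℝ, Real.exp (-(1/2) * (x - c) ^ 2))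
      = ∫ x : ℝ, Real.exp (-(1/2) * x ^ 2) :=
    integral_sub_right_eq_self (fun x => Real.exp (-(1/2) * x ^ 2)) c
  rw [this, integral_gaussian]
  have h2 : √(π / (1/2)) = √(2 * π) := by norm_num [mul_comm]
  rw [h2]
  have : √(2 * π) ≠ 0 := by positivity
  field_simp

theorem lintegral_pi_prod {n : ℕ} (μ : Fin n → Measure ℝ) [∀ i, SigmaFinite (μ i)]
    (g : Fin n → ℝ → ℝ≥0∞) (hg : ∀ i, Measurable (g i)) :
    ∫⁻ y, ∏ i, g i (y i) ∂Measure.pi μ = ∏ i, ∫⁻ x, g i x ∂μ i := by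
  induction n with
  | zero => simp [lintegral_const, Measure.pi_univ]
  | succ n ih =>
    have hmp := (measurePreserving_piFinSuccAbove μ 0).symm
    have hmeas : Measurable fun y : ∀ _ : Fin (n+1), ℝ => ∏ i, g i (y i) :=
      Finset.measurable_prod _ fun i _ => (hg i).comp (measurable_pi_apply i)
    rw [← hmp.lintegral_comp hmeas]
    simp_rw [MeasurableEquiv.piFinSuccAbove_symm_apply, Fin.insertNthEquiv,
      Fin.prod_univ_succ, Fin.insertNth_zero, Equiv.coe_fn_mk, Fin.cons_zero, Fin.cons_succ]
    simp only [Fin.zero_succAbove, cast_eq]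
    rw [lintegral_prod_mul (f := g 0) (g := fun y : Fin n → ℝ => ∏ i, g i.succ (y i))
      ((hg 0).aemeasurable)
      ((Finset.measurable_prod _ fun i _ =>
        ((hg i.succ).comp (measurable_pi_apply i) :
          Measurable fun y : Fin n → ℝ => g i.succ (y i))).aemeasurable)]
    rw [ih (fun i => μ i.succ) (fun i => g i.succ) (fun i => hg _)]

theorem pi_map_sub {n : ℕ} (c : Fin n → ℝ) :
    (Measure.pi fun _ : Fin n => gaussianReal 0 1).map (fun x i => x i - c i)
      = Measure.pi (fun i => gaussianReal (-(c i)) 1) := by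
  refine (Measure.pi_eq fun s hs => ?_).symm
  have hm : Measurable fun (x : Fin n → ℝ) i => x i - c i :=
    measurable_pi_lambda _ fun i => (measurable_pi_apply i).sub_const _
  rw [Measure.map_apply hm (MeasurableSet.univ_pi hs)]
  have hpre : (fun (x : Fin n → ℝ) i => x i - c i) ⁻¹' Set.pi Set.univ s
      = Set.pi Set.univ (fun i => (fun x : ℝ => x - c i) ⁻¹' s i) := by
    ext x; simp [Set.mem_pi]
  rw [hpre, Measure.pi_pi]
  refine Finset.prod_congr rfl fun i _ => ?_
  have h1 : gaussianReal (-(c i)) 1 = (gaussianReal 0 1).map (· + (-(c i))) := by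
    rw [gaussianReal_map_add_const]; norm_num
  rw [h1, Measure.map_apply (measurable_add_const _) (hs i)]
  congr 1

theorem pi_map_neg (n : ℕ) :
    (Measure.pi fun _ : Fin n => gaussianReal 0 1).map (fun (x : Fin n → ℝ) i => -(x i))
      = Measure.pi fun _ : Fin n => gaussianReal 0 1 := by
  refine (Measure.pi_eq fun s hs => ?_).symm
  have hm : Measurable fun (x : Fin n → ℝ) i => -(x i) :=
    measurable_pi_lambda _ fun i => (measurable_pi_apply i).neg
  rw [Measure.map_apply hm (MeasurableSet.univ_pi hs)]
  have hpre : (fun (x : Fin n → ℝ) i => -(x i)) ⁻¹' Set.pi Set.univ s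
      = Set.pi Set.univ (fun i => (fun x : ℝ => -x) ⁻¹' s i) := by
    ext x; simp [Set.mem_pi]
  rw [hpre, Measure.pi_pi]
  refine Finset.prod_congr rfl fun i _ => ?_
  have h0 : (gaussianReal 0 1).map (fun x : ℝ => -x) = gaussianReal 0 1 := by
    have h1 := gaussianReal_map_const_mul (μ := 0) (v := 1) (-1 : ℝ)
    have h2 : (fun x : ℝ => (-1 : ℝ) * x) = fun x : ℝ => -x := by funext x; ring
    rw [h2] at h1
    rw [h1]
    congr 1
    · ring
    · exact NNReal.coe_injective (by norm_num)
  have h3 := Measure.map_apply (μ := gaussianReal 0 1)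
    (measurable_neg : Measurable fun x : ℝ => -x) (hs i)
  rw [h0] at h3
  exact h3.symm

theorem pi_gauss_withDensity {n : ℕ} (a : Fin n → ℝ) :
    Measure.pi (fun i => gaussianReal (a i) 1)
      = (Measure.pi fun _ : Fin n => gaussianReal 0 1).withDensity
        (fun y => ∏ i, ENNReal.ofReal (Real.exp (a i * y i - (a i) ^ 2 / 2))) := by
  set g : Fin n → ℝ → ℝ≥0∞ := fun i x => ENNReal.ofReal (Real.exp (a i * x - (a i) ^ 2 / 2))
    with hg_def
  have hg : ∀ i, Measurable (g i) := fun i => by fun_prop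
  refine Measure.pi_eq fun s hs => ?_
  rw [withDensity_apply _ (MeasurableSet.univ_pi hs),
    ← lintegral_indicator (MeasurableSet.univ_pi hs)]
  have hind : (Set.pi Set.univ s).indicator (fun y => ∏ i, g i (y i))
      = fun y => ∏ i, (s i).indicator (g i) (y i) := by
    funext y
    by_cases hy : y ∈ Set.pi Set.univ s
    · rw [Set.indicator_of_mem hy]
      exact Finset.prod_congr rfl fun i _ =>
        (Set.indicator_of_mem (hy i (Set.mem_univ i)) _).symm
    · rw [Set.indicator_of_notMem hy]
      rw [Set.mem_pi] at hy
      push_neg at hy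
      obtain ⟨i, _, hi⟩ := hy
      exact (Finset.prod_eq_zero (Finset.mem_univ i) (Set.indicator_of_notMem hi _)).symm
  rw [hind, lintegral_pi_prod _ _ (fun i => (hg i).indicator (hs i))]
  refine Finset.prod_congr rfl fun i _ => ?_
  rw [gaussianReal_eq_withDensity (a i), withDensity_apply _ (hs i),
    ← lintegral_indicator (hs i)]

set_option maxHeartbeats 2000000

/-- There are universal constants `c₂, C₂ > 0` such that for any norm `ν` on `ℝⁿ` and
any `t ≥ 4`, the tilted norm `f_t(x) = ν(x) + t|⟨x, x₀*⟩|` satisfies, for all `ε > 0`,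
`P(|f_t(Z) − E f_t(Z)| ≥ ε) ≥ c₂ exp(−C₂ ε² / b_t²)` where `b_t = (1+t) b(X) = Lip(f_t)`. -/
theorem stmt15 :
    ∃ c₂ > (0 : ℝ), ∃ C₂ > (0 : ℝ),
      ∀ (n : ℕ) (ν : EuclideanSpace ℝ (Fin n) → ℝ) (b : ℝ),
      (∀ x y, ν (x + y) ≤ ν x + ν y) →
      (∀ (c : ℝ) x, ν (c • x) = |c| * ν x) →
      (∀ x, ν x = 0 → x = 0) →
      IsGreatest (ν '' {θ | ‖θ‖ = 1}) b →
      ∀ (xstar : EuclideanSpace ℝ (Fin n)), ‖xstar‖ = b →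
      (∀ x, |⟪x, xstar⟫| ≤ ν x) →
      ∀ t : ℝ, 4 ≤ t →
      ∀ ε > (0 : ℝ),
        ((stdGaussian n) {x | |(ν x + t * |⟪x, xstar⟫|) -
            ∫ z, (ν z + t * |⟪z, xstar⟫|) ∂stdGaussian n| ≥ ε}).toReal ≥
          c₂ * Real.exp (-C₂ * ε ^ 2 / ((1 + t) * b) ^ 2) := by
  refine ⟨Real.exp (-9) / 8, by positivity, 100 / 9, by norm_num, ?_⟩
  intro n ν b hsub hhom hzero hgr xstar hxb hdom t ht ε hε
  obtain ⟨⟨θ, hθ1, hθb⟩, hub⟩ := hgr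
  haveI hγ_prob : IsProbabilityMeasure (stdGaussian n) :=
    Measure.isProbabilityMeasure_map (MeasurableEquiv.toLp 2 (Fin n → ℝ)).measurable.aemeasurable
  set γ := stdGaussian n with hγ_def
  -- basic facts about ν
  have hν0 : ν 0 = 0 := by
    have := hhom 0 0
    simpa using this
  have hνneg : ∀ x, ν (-x) = ν x := fun x => by
    have := hhom (-1) x
    simpa using this
  have hνnonneg : ∀ x, 0 ≤ ν x := fun x => by
    have h := hsub x (-x)
    rw [add_neg_cancel, hν0, hνneg] at h
    linarith
  have hb0 : 0 < b := by
    rcases lt_or_ge 0 b with h | h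
    · exact h
    · exfalso
      have hθ0 : ν θ = 0 := le_antisymm (hθb ▸ h) (hνnonneg θ)
      have := hzero θ hθ0
      rw [this] at hθ1
      simp at hθ1
  have hbne : b ≠ 0 := hb0.ne'
  -- the unit vector u
  set u : EuclideanSpace ℝ (Fin n) := b⁻¹ • xstar with hu_def
  have hunorm : ‖u‖ = 1 := by
    rw [hu_def, norm_smul, hxb, norm_inv, Real.norm_eq_abs, abs_of_pos hb0,
      inv_mul_cancel₀ hbne]
  have hνu : ν u ≤ b := hub ⟨u, hunorm, rfl⟩
  have hinner_u : ⟪u, xstar⟫ = b := by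
    rw [hu_def, real_inner_smul_left, real_inner_self_eq_norm_sq, hxb]
    field_simp
  have hνle : ∀ x, ν x ≤ b * ‖x‖ := by
    intro x
    by_cases hx : x = 0
    · simp [hx, hν0]
    · have hnx : ‖x‖ ≠ 0 := norm_ne_zero_iff.mpr hx
      have h1 : ν x = ‖x‖ * ν (‖x‖⁻¹ • x) := by
        have h := hhom ‖x‖ (‖x‖⁻¹ • x)
        rw [smul_smul, mul_inv_cancel₀ hnx, one_smul,
          abs_of_pos (norm_pos_iff.mpr hx)] at h
        exact h
      have h2 : ν (‖x‖⁻¹ • x) ≤ b := hub ⟨_, norm_smul_inv_norm hx, rfl⟩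
      rw [h1, mul_comm b]
      exact mul_le_mul_of_nonneg_left h2 (norm_nonneg x)
  -- parameters
  have ht1 : (0 : ℝ) < t - 1 := by linarith
  set s : ℝ := 2 * ε / ((t - 1) * b) with hs_def
  have hs0 : 0 < s := by positivity
  set v : EuclideanSpace ℝ (Fin n) := s • u with hv_def
  have hts : (t - 1) * s * b = 2 * ε := by
    rw [hs_def]
    field_simp
  have hsumv : ∑ i, v i ^ 2 = s ^ 2 := by
    have h1 : ∑ i, u i ^ 2 = 1 := by
      have h := EuclideanSpace.norm_eq u
      rw [hunorm] at h
      have h2 : (1 : ℝ) = √(∑ i, ‖u i‖ ^ 2) := h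
      have h3 : ∑ i, ‖u i‖ ^ 2 = ∑ i, u i ^ 2 := by
        refine Finset.sum_congr rfl fun i _ => ?_
        rw [Real.norm_eq_abs, sq_abs]
      rw [h3] at h2
      have h4 : (∑ i, u i ^ 2) = 1 := by
        have h5 := congrArg (fun r : ℝ => r ^ 2) h2
        simpa [Real.sq_sqrt (Finset.sum_nonneg fun i _ => sq_nonneg (u i))] using h5.symm
      exact h4
    have h2 : ∀ i, v i = s * u i := fun i => rfl
    simp_rw [h2, mul_pow, ← Finset.mul_sum, h1, mul_one]
  -- function f and constant m
  set m : ℝ := ∫ z, (ν z + t * |⟪z, xstar⟫|) ∂stdGaussian n with hm_def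
  set f : EuclideanSpace ℝ (Fin n) → ℝ := fun x => ν x + t * |⟪x, xstar⟫| with hf_def
  have heven : ∀ x, f (-x) = f x := by
    intro x
    simp only [hf_def, hνneg, inner_neg_left, abs_neg]
  have hshift : ∀ x : EuclideanSpace ℝ (Fin n), 0 ≤ ⟪x, xstar⟫ →
      f x + 2 * ε ≤ f (x + v) := by
    intro x hx
    have hνv : ν v ≤ s * b := by
      rw [hv_def, hhom, abs_of_pos hs0]
      exact mul_le_mul_of_nonneg_left hνu hs0.le
    have hν1 : ν x ≤ ν (x + v) + s * b := by
      have h := hsub (x + v) (-v)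
      rw [add_neg_cancel_right, hνneg] at h
      linarith
    have hiv : ⟪x + v, xstar⟫ = ⟪x, xstar⟫ + s * b := by
      rw [inner_add_left, hv_def, real_inner_smul_left, hinner_u]
    have hsb : 0 ≤ s * b := by positivity
    have habs1 : |⟪x, xstar⟫| = ⟪x, xstar⟫ := abs_of_nonneg hx
    have habs2 : |⟪x + v, xstar⟫| = ⟪x, xstar⟫ + s * b := by
      rw [hiv, abs_of_nonneg (by linarith)]
    have h2e : 2 * ε = (t - 1) * (s * b) := by rw [← hts]; ring
    simp only [hf_def]
    rw [habs1, habs2, h2e]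
    nlinarith [hν1]
  -- sets
  have hcoord : ∀ i, Measurable (fun y : EuclideanSpace ℝ (Fin n) => y i) :=
    fun i => by fun_prop
  have hinner_meas : Measurable (fun x : EuclideanSpace ℝ (Fin n) => ⟪x, xstar⟫) := by
    have : Continuous (fun x : EuclideanSpace ℝ (Fin n) => ⟪x, xstar⟫) :=
      continuous_id.inner continuous_const
    exact this.measurable
  have hνcont : Continuous ν := by
    rw [Metric.continuous_iff]
    intro x δ hδ
    refine ⟨δ / (b + 1), by positivity, fun y hy => ?_⟩
    have h1 : ν y - ν x ≤ ν (y - x) := by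
      have := hsub x (y - x)
      rw [add_sub_cancel] at this
      linarith
    have h2 : ν x - ν y ≤ ν (y - x) := by
      have := hsub y (x - y)
      rw [add_sub_cancel] at this
      have hn : ν (x - y) = ν (y - x) := by
        rw [← hνneg (x - y), neg_sub]
      linarith [hn ▸ this]
    have h3 : ν (y - x) ≤ b * ‖y - x‖ := hνle _
    have h4 : ‖y - x‖ < δ / (b + 1) := by
      rw [← dist_eq_norm]
      exact hy
    have h5 : |ν y - ν x| ≤ b * ‖y - x‖ := abs_sub_le_iff.mpr ⟨by linarith, by linarith⟩
    rw [Real.dist_eq]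
    calc |ν y - ν x| ≤ b * ‖y - x‖ := h5
      _ < δ := by
          have h6 : ‖y - x‖ * (b + 1) < δ := (lt_div_iff₀ (by positivity)).mp h4
          nlinarith [norm_nonneg (y - x)]
  -- continuing
  have hfcont : Continuous f := by
    rw [hf_def]
    exact hνcont.add (continuous_const.mul ((continuous_id.inner continuous_const).abs))
  set A : Set (EuclideanSpace ℝ (Fin n)) := {x | |f x - m| < ε} with hA_def
  have hA_meas : MeasurableSet A :=
    measurableSet_lt ((hfcont.sub continuous_const).abs.measurable) measurable_const
  have hAc : {x : EuclideanSpace ℝ (Fin n) | |(ν x + t * |⟪x, xstar⟫|) - m| ≥ ε} = Aᶜ := by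
    ext x
    simp only [hA_def, Set.mem_setOf_eq, Set.mem_compl_iff, not_lt, ge_iff_le, hf_def]
  set B : Set (EuclideanSpace ℝ (Fin n)) := A ∩ {x | 0 ≤ ⟪x, xstar⟫} with hB_def
  have hB_meas : MeasurableSet B :=
    hA_meas.inter (measurableSet_le measurable_const hinner_meas)
  have hlow : ENNReal.ofReal (Real.exp (-9) / 8 *
      Real.exp (-(100 / 9) * ε ^ 2 / ((1 + t) * b) ^ 2)) ≤ γ Aᶜ := by
    have hexple1 : Real.exp (-(100 / 9) * ε ^ 2 / ((1 + t) * b) ^ 2) ≤ 1 := by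
      rw [Real.exp_le_one_iff]
      apply div_nonpos_of_nonpos_of_nonneg
      · nlinarith [sq_nonneg ε]
      · positivity
    by_cases hcase : γ A ≤ ENNReal.ofReal (1 / 2)
    · -- Case 1 : A is small, its complement has measure at least 1/2
      have h1 : (1 : ℝ≥0∞) ≤ γ A + γ Aᶜ := by
        calc (1 : ℝ≥0∞) = γ Set.univ := measure_univ.symm
          _ = γ (A ∪ Aᶜ) := by rw [Set.union_compl_self]
          _ ≤ γ A + γ Aᶜ := measure_union_le _ _
      have h2 : ENNReal.ofReal (1 / 2) ≤ γ Aᶜ := by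
        have h3 : (1 : ℝ≥0∞) - γ A ≤ γ Aᶜ := tsub_le_iff_left.mpr h1
        refine le_trans (le_trans (le_of_eq ?_) (tsub_le_tsub le_rfl hcase)) h3
        rw [← ENNReal.ofReal_one, ← ENNReal.ofReal_sub _ (by norm_num : (0 : ℝ) ≤ 1 / 2)]
        norm_num
      refine le_trans (ENNReal.ofReal_le_ofReal ?_) h2
      nlinarith [Real.exp_pos (-(9 : ℝ)),
        Real.exp_pos (-(100 / 9) * ε ^ 2 / ((1 + t) * b) ^ 2),
        Real.exp_le_one_iff.mpr (by norm_num : (-9 : ℝ) ≤ 0)]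
    · -- Case 2
      have hA2 : ENNReal.ofReal (1 / 2) ≤ γ A := (not_le.mp hcase).le
      set B' : Set (EuclideanSpace ℝ (Fin n)) := A ∩ {x | ⟪x, xstar⟫ ≤ 0} with hB'_def
      have hBB' : B' = (fun x : EuclideanSpace ℝ (Fin n) => -x) ⁻¹' B := by
        ext x
        simp only [hB'_def, hB_def, Set.mem_inter_iff, Set.mem_preimage, Set.mem_setOf_eq,
          hA_def]
        constructor
        · rintro ⟨ha, hi⟩
          refine ⟨by rw [heven x]; exact ha, ?_⟩
          rw [inner_neg_left]
          linarith
        · rintro ⟨ha, hi⟩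
          rw [heven x] at ha
          rw [inner_neg_left] at hi
          exact ⟨ha, by linarith⟩
      have hnegmp : MeasurePreserving (fun x : EuclideanSpace ℝ (Fin n) => -x) γ γ := by
        constructor
        · exact continuous_neg.measurable
        · rw [hγ_def, _root_.stdGaussian, Measure.map_map continuous_neg.measurable
            (MeasurableEquiv.toLp 2 (Fin n → ℝ)).measurable]
          have : (fun x : EuclideanSpace ℝ (Fin n) => -x) ∘ (MeasurableEquiv.toLp 2 (Fin n → ℝ))
              = (MeasurableEquiv.toLp 2 (Fin n → ℝ)) ∘ (fun (x : Fin n → ℝ) i => -(x i)) := by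
            funext x; rfl
          rw [this, ← Measure.map_map (MeasurableEquiv.toLp 2 (Fin n → ℝ)).measurable
            (measurable_pi_lambda _ fun i => (measurable_pi_apply i).neg :
              Measurable fun (x : Fin n → ℝ) i => -(x i)), pi_map_neg n]
      have hγB' : γ B' = γ B := by
        rw [hBB']
        exact hnegmp.measure_preimage hB_meas.nullMeasurableSet
      have hcover : A ⊆ B ∪ B' := by
        intro x hx
        rcases le_total 0 (⟪x, xstar⟫ : ℝ) with h | h
        · exact Or.inl ⟨hx, h⟩
        · exact Or.inr ⟨hx, h⟩
      have hγB : ENNReal.ofReal (1 / 4) ≤ γ B := by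
        have h1 : γ A ≤ γ B + γ B' := le_trans (measure_mono hcover) (measure_union_le _ _)
        rw [hγB', ← two_mul] at h1
        have h2 : (2 : ℝ≥0∞) * ENNReal.ofReal (1 / 4) ≤ 2 * γ B := by
          refine le_trans (le_of_eq ?_) (le_trans hA2 h1)
          rw [show (2 : ℝ≥0∞) = ENNReal.ofReal 2 by simp,
            ← ENNReal.ofReal_mul (by norm_num)]
          norm_num
        exact (ENNReal.mul_le_mul_iff_right (by norm_num) (by norm_num)).mp h2
      -- Chernoff bound for the linear functional
      set D : Set (EuclideanSpace ℝ (Fin n)) := {y | ∑ i, v i * y i ≤ 3 * s} with hD_def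
      have hsum_meas : Measurable (fun y : EuclideanSpace ℝ (Fin n) => ∑ i, v i * y i) :=
        Finset.measurable_sum _ fun i _ => (hcoord i).const_mul _
      have hD_meas : MeasurableSet D := measurableSet_le hsum_meas measurable_const
      have hFmeas : Measurable fun y : EuclideanSpace ℝ (Fin n) =>
          ENNReal.ofReal (Real.exp ((3 / s) * ∑ i, v i * y i)) :=
        (Real.measurable_exp.comp (hsum_meas.const_mul _)).ennreal_ofReal
      have hmgf : ∫⁻ y, ENNReal.ofReal (Real.exp ((3 / s) * ∑ i, v i * y i)) ∂γ
          = ENNReal.ofReal (Real.exp ((9 : ℝ) / 2)) := by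
        have hrw : ∀ y : EuclideanSpace ℝ (Fin n),
            ENNReal.ofReal (Real.exp ((3 / s) * ∑ i, v i * y i))
              = ∏ i, ENNReal.ofReal (Real.exp ((3 / s * v i) * y i)) := by
          intro y
          rw [← ENNReal.ofReal_prod_of_nonneg (fun i _ => Real.exp_nonneg _),
            ← Real.exp_sum, Finset.mul_sum]
          congr 2
          exact Finset.sum_congr rfl fun i _ => by ring
        simp_rw [hrw]
        have hPP := lintegral_pi_prod (fun _ : Fin n => gaussianReal 0 1)
          (fun i x => ENNReal.ofReal (Real.exp ((3 / s * v i) * x)))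
          (fun i => (Real.measurable_exp.comp (measurable_id.const_mul _)).ennreal_ofReal)
        calc ∫⁻ y, ∏ i, ENNReal.ofReal (Real.exp ((3 / s * v i) * y i)) ∂γ
            = ∏ i, ∫⁻ x, ENNReal.ofReal (Real.exp ((3 / s * v i) * x)) ∂gaussianReal 0 1 :=
              by rw [hγ_def, _root_.stdGaussian, lintegral_map_equiv]; exact hPP
          _ = ∏ i, ENNReal.ofReal (Real.exp ((3 / s * v i) ^ 2 / 2)) :=
              Finset.prod_congr rfl fun i _ => lintegral_exp_gaussian _
          _ = ENNReal.ofReal (Real.exp ((9 : ℝ) / 2)) := by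
              rw [← ENNReal.ofReal_prod_of_nonneg (fun i _ => Real.exp_nonneg _),
                ← Real.exp_sum]
              congr 1
              have h1 : ∀ i : Fin n, (3 / s * v i) ^ 2 / 2 = 9 / s ^ 2 / 2 * v i ^ 2 :=
                fun i => by field_simp; ring
              rw [Finset.sum_congr rfl fun i _ => h1 i, ← Finset.mul_sum, hsumv]
              field_simp
      have hDc : γ Dᶜ ≤ ENNReal.ofReal (Real.exp (-(9 : ℝ) / 2)) := by
        have hsubset : Dᶜ ⊆ {y : EuclideanSpace ℝ (Fin n) |
            ENNReal.ofReal (Real.exp (9 : ℝ))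
              ≤ ENNReal.ofReal (Real.exp ((3 / s) * ∑ i, v i * y i))} := by
          intro y hy
          simp only [hD_def, Set.mem_compl_iff, Set.mem_setOf_eq, not_le] at hy
          simp only [Set.mem_setOf_eq]
          apply ENNReal.ofReal_le_ofReal
          apply Real.exp_le_exp.mpr
          have h1 : (3 / s) * (3 * s) ≤ (3 / s) * ∑ i, v i * y i :=
            mul_le_mul_of_nonneg_left hy.le (by positivity)
          calc (9 : ℝ) = (3 / s) * (3 * s) := by field_simp; ring
            _ ≤ _ := h1
        have h1 : ENNReal.ofReal (Real.exp (9 : ℝ)) * γ Dᶜ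
            ≤ ENNReal.ofReal (Real.exp ((9 : ℝ) / 2)) := by
          refine le_trans (mul_le_mul_right (measure_mono hsubset) _) ?_
          exact le_trans (mul_meas_ge_le_lintegral₀ hFmeas.aemeasurable _) (le_of_eq hmgf)
        have h2 : ENNReal.ofReal (Real.exp (9 : ℝ)) * γ Dᶜ
            ≤ ENNReal.ofReal (Real.exp (9 : ℝ)) * ENNReal.ofReal (Real.exp (-(9 : ℝ) / 2)) := by
          rw [← ENNReal.ofReal_mul (Real.exp_nonneg _), ← Real.exp_add]
          refine le_trans h1 (le_of_eq ?_)
          norm_num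
        exact (ENNReal.mul_le_mul_iff_right
          (ENNReal.ofReal_pos.mpr (Real.exp_pos _)).ne' ENNReal.ofReal_ne_top).mp h2
      have hexp92 : Real.exp (-(9 : ℝ) / 2) ≤ 1 / 8 := by
        have h52 : (5 / 2 : ℝ) ≤ Real.exp (3 / 2) := by
          have := Real.add_one_le_exp (3 / 2 : ℝ)
          linarith
        have h8 : (8 : ℝ) ≤ Real.exp ((9 : ℝ) / 2) := by
          have h3 : Real.exp ((9 : ℝ) / 2) = Real.exp (3 / 2) ^ (3 : ℕ) := by
            rw [← Real.exp_nat_mul]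
            norm_num
          rw [h3]
          have hple := pow_le_pow_left₀ (by norm_num : (0 : ℝ) ≤ 5 / 2) h52 3
          nlinarith [hple]
        calc Real.exp (-(9 : ℝ) / 2) = (Real.exp ((9 : ℝ) / 2))⁻¹ := by
              rw [← Real.exp_neg]
              norm_num
          _ ≤ 8⁻¹ := inv_anti₀ (by norm_num) h8
          _ = 1 / 8 := by norm_num
      have hBD : ENNReal.ofReal (1 / 8) ≤ γ (B ∩ D) := by
        have hsplit : γ B ≤ γ (B ∩ D) + γ Dᶜ := by
          refine le_trans (measure_mono ?_) (measure_union_le _ _)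
          intro x hx
          by_cases hxD : x ∈ D
          · exact Or.inl ⟨hx, hxD⟩
          · exact Or.inr hxD
        have h1 : ENNReal.ofReal (1 / 8) + γ Dᶜ ≤ γ (B ∩ D) + γ Dᶜ := by
          refine le_trans ?_ hsplit
          calc ENNReal.ofReal (1 / 8) + γ Dᶜ
              ≤ ENNReal.ofReal (1 / 8) + ENNReal.ofReal (1 / 8) := by
                exact add_le_add le_rfl (le_trans hDc (ENNReal.ofReal_le_ofReal hexp92))
            _ = ENNReal.ofReal (1 / 4) := by
                rw [← ENNReal.ofReal_add (by norm_num) (by norm_num)]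
                norm_num
            _ ≤ γ B := hγB
        exact ENNReal.le_of_add_le_add_right (measure_ne_top γ Dᶜ) h1
      -- the shift argument
      have hsub_meas : Measurable (fun x : EuclideanSpace ℝ (Fin n) => x - v) :=
        (continuous_sub_right v).measurable
      have hincl : (fun x : EuclideanSpace ℝ (Fin n) => x - v) ⁻¹' (B ∩ D) ⊆ Aᶜ := by
        intro x hx
        obtain ⟨⟨hxA, hxI⟩, _⟩ := hx
        have h1 := hshift (x - v) hxI
        rw [sub_add_cancel] at h1
        simp only [hA_def, Set.mem_setOf_eq] at hxA
        simp only [Set.mem_compl_iff, hA_def, Set.mem_setOf_eq, not_lt]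
        have h2 := abs_lt.mp hxA
        calc ε ≤ f x - m := by linarith [h2.1]
          _ ≤ |f x - m| := le_abs_self _
      have hmap : γ ((fun x : EuclideanSpace ℝ (Fin n) => x - v) ⁻¹' (B ∩ D))
          = (γ.map (fun x : EuclideanSpace ℝ (Fin n) => x - v)) (B ∩ D) :=
        (Measure.map_apply hsub_meas (hB_meas.inter hD_meas)).symm
      have hmap2 : γ.map (fun x : EuclideanSpace ℝ (Fin n) => x - v)
          = (Measure.pi (fun i : Fin n => gaussianReal (-(v i)) 1)).map
              (MeasurableEquiv.toLp 2 (Fin n → ℝ)) := by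
        rw [hγ_def, _root_.stdGaussian, Measure.map_map hsub_meas
          (MeasurableEquiv.toLp 2 (Fin n → ℝ)).measurable]
        have : (fun x : EuclideanSpace ℝ (Fin n) => x - v) ∘ (MeasurableEquiv.toLp 2 (Fin n → ℝ))
            = (MeasurableEquiv.toLp 2 (Fin n → ℝ)) ∘ (fun (x : Fin n → ℝ) i => x i - v i) := by
          funext x; rfl
        rw [this, ← Measure.map_map (MeasurableEquiv.toLp 2 (Fin n → ℝ)).measurable
          (measurable_pi_lambda _ fun i => (measurable_pi_apply i).sub_const _),
          pi_map_sub (fun i => v i)]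
      have hwd : (γ.map (fun x : EuclideanSpace ℝ (Fin n) => x - v)) (B ∩ D)
          = ∫⁻ y in B ∩ D,
              ∏ i, ENNReal.ofReal (Real.exp ((-(v i)) * y i - (-(v i)) ^ 2 / 2)) ∂γ := by
        rw [hmap2, pi_gauss_withDensity (fun i => -(v i)), MeasurableEquiv.map_apply,
          withDensity_apply _ ((MeasurableEquiv.toLp 2 (Fin n → ℝ)).measurable
            (hB_meas.inter hD_meas)), hγ_def, _root_.stdGaussian,
          Measure.restrict_map (MeasurableEquiv.toLp 2 (Fin n → ℝ)).measurable
            (hB_meas.inter hD_meas), lintegral_map_equiv]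
        rfl
      have hGmeas : Measurable fun y : EuclideanSpace ℝ (Fin n) =>
          ∏ i, ENNReal.ofReal (Real.exp ((-(v i)) * y i - (-(v i)) ^ 2 / 2)) :=
        Finset.measurable_prod _ fun i _ =>
          (Real.measurable_exp.comp (((hcoord i).const_mul _).sub_const _)).ennreal_ofReal
      have hlowint : ENNReal.ofReal (Real.exp (-(3 * s) - s ^ 2 / 2)) * γ (B ∩ D)
          ≤ ∫⁻ y in B ∩ D,
              ∏ i, ENNReal.ofReal (Real.exp ((-(v i)) * y i - (-(v i)) ^ 2 / 2)) ∂γ := by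
        rw [← setLIntegral_const (B ∩ D) _]
        refine setLIntegral_mono hGmeas ?_
        intro y hy
        obtain ⟨_, hyD⟩ := hy
        simp only [hD_def, Set.mem_setOf_eq] at hyD
        rw [← ENNReal.ofReal_prod_of_nonneg (fun i _ => Real.exp_nonneg _), ← Real.exp_sum]
        apply ENNReal.ofReal_le_ofReal
        apply Real.exp_le_exp.mpr
        have hsum_eq : ∑ i, ((-(v i)) * y i - (-(v i)) ^ 2 / 2)
            = -(∑ i, v i * y i) - s ^ 2 / 2 := by
          rw [Finset.sum_sub_distrib]
          congr 1
          · rw [← Finset.sum_neg_distrib]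
            exact Finset.sum_congr rfl fun i _ => by ring
          · rw [← Finset.sum_div, ← hsumv]
            congr 1
            exact Finset.sum_congr rfl fun i _ => by ring
        rw [hsum_eq]
        linarith
      -- real-number inequality for the constants
      have hs2X : s ^ 2 ≤ 100 / 9 * ε ^ 2 / ((1 + t) * b) ^ 2 := by
        rw [hs_def, div_pow, div_le_div_iff₀ (by positivity) (by positivity)]
        nlinarith [mul_nonneg (mul_nonneg (sq_nonneg ε) (sq_nonneg b))
          (mul_nonneg (by linarith : (0 : ℝ) ≤ 4 * t - 1) (by linarith : (0 : ℝ) ≤ t - 4))]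
      have h3s : 3 * s ≤ s ^ 2 / 2 + 9 / 2 := by nlinarith [sq_nonneg (s - 3)]
      have hrealineq : Real.exp (-9) / 8 * Real.exp (-(100 / 9) * ε ^ 2 / ((1 + t) * b) ^ 2)
          ≤ Real.exp (-(3 * s) - s ^ 2 / 2) * (1 / 8) := by
        have hexp : Real.exp (-9 + -(100 / 9 * ε ^ 2 / ((1 + t) * b) ^ 2))
            ≤ Real.exp (-(3 * s) - s ^ 2 / 2) := by
          apply Real.exp_le_exp.mpr
          linarith
        calc Real.exp (-9) / 8 * Real.exp (-(100 / 9) * ε ^ 2 / ((1 + t) * b) ^ 2)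
            = Real.exp (-9 + -(100 / 9 * ε ^ 2 / ((1 + t) * b) ^ 2)) * (1 / 8) := by
              rw [Real.exp_add]
              ring_nf
          _ ≤ Real.exp (-(3 * s) - s ^ 2 / 2) * (1 / 8) :=
              mul_le_mul_of_nonneg_right hexp (by norm_num)
      calc ENNReal.ofReal (Real.exp (-9) / 8 *
            Real.exp (-(100 / 9) * ε ^ 2 / ((1 + t) * b) ^ 2))
          ≤ ENNReal.ofReal (Real.exp (-(3 * s) - s ^ 2 / 2) * (1 / 8)) :=
            ENNReal.ofReal_le_ofReal hrealineq
        _ = ENNReal.ofReal (Real.exp (-(3 * s) - s ^ 2 / 2)) * ENNReal.ofReal (1 / 8) :=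
            ENNReal.ofReal_mul (Real.exp_nonneg _)
        _ ≤ ENNReal.ofReal (Real.exp (-(3 * s) - s ^ 2 / 2)) * γ (B ∩ D) :=
            mul_le_mul_right hBD _
        _ ≤ ∫⁻ y in B ∩ D,
              ∏ i, ENNReal.ofReal (Real.exp ((-(v i)) * y i - (-(v i)) ^ 2 / 2)) ∂γ :=
            hlowint
        _ = (γ.map (fun x : EuclideanSpace ℝ (Fin n) => x - v)) (B ∩ D) := hwd.symm
        _ = γ ((fun x : EuclideanSpace ℝ (Fin n) => x - v) ⁻¹' (B ∩ D)) := hmap.symm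
        _ ≤ γ Aᶜ := measure_mono hincl
  -- conclusion
  rw [hAc, ge_iff_le]
  have hfin := (ENNReal.ofReal_le_iff_le_toReal (measure_ne_top γ Aᶜ)).mp hlow
  refine le_trans (le_of_eq ?_) hfin
  ring_nf
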